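/- arXiv:2301.05840 — 3 statements merged into one kernel-verified Lean document; each statement's English description precedes it below -/
import Mathlib

section
/- In S_{8g}, the permutation Q^{4g} τ is a product of 4g disjoint transpositions, namely (1,4g+3)(3,4g+5)⋯(4g-1,4g+1)(2,4g+4)(4,4g+6)⋯(4g-2,8g). -/
open Equiv

/-- `Q` is the `8g`-cycle `(1,2,…,8g)` of the paper, acting on the 0-indexed
type `Fin (8*g)` (label `ℓ ∈ {1,…,8g}` corresponds to `ℓ - 1 : Fin (8*g)`). -/
def Q (g : ℕ) : Equiv.Perm (Fin (8 * g)) := finRotate (8 * g)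

/-- `τ = (1,3,…,4g−1)(2,4,…,4g)(8g−1,8g−3,…,4g+1)(8g,8g−2,…,4g+2)`.
On 0-indexed labels this rotates the first half `{0,…,4g−1}` by `+2 (mod 4g)` and the
second half `{4g,…,8g−1}` by `−2 (mod 4g)`. -/
def tau (g : ℕ) : Equiv.Perm (Fin (8 * g)) :=
  ((finSumFinEquiv (m := 4 * g) (n := 4 * g)).trans
      (finCongr (show 4 * g + 4 * g = 8 * g by ring))).permCongr
    (Equiv.sumCongr ((finRotate (4 * g)) ^ 2) (((finRotate (4 * g))⁻¹) ^ 2))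

/-- Properties (1)–(5) of Proposition 5.2 for the permutation `φ^{(α,β)} ∈ S_{8g}`
associated to a labelled minimally intersecting separating filling pair `(α,β)`.
In the 0-indexed convention, a paper label `ℓ` is odd (an `α`-arc) iff `ℓ - 1` is even.
(1) φ is parity reversing;
(2) φ is a product of two disjoint `4g`-cycles;
(3) one cycle contains all of `{1,3,…,4g−1}`, the other all of `{4g+1,…,8g−1}`;
(4) a cycle containing an even label `2i` also contains `2i + 4g (mod 8g)`;
(5) the even labels in one cycle are all `≡ 2 (mod 4)`, in the other all `≡ 0 (mod 4)`. -/
def IsFillingPermAux (g : ℕ) (φ : Equiv.Perm (Fin (8 * g))) : Prop :=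
  (∀ k, Even ((φ k).val) ↔ ¬ Even k.val) ∧
  φ.cycleType = {4 * g, 4 * g} ∧
  ((∀ k k' : Fin (8 * g), Even k.val → Even k'.val →
      k.val < 4 * g → k'.val < 4 * g → φ.SameCycle k k') ∧
   (∀ k k' : Fin (8 * g), Even k.val → Even k'.val →
      4 * g ≤ k.val → 4 * g ≤ k'.val → φ.SameCycle k k') ∧
   (∀ k k' : Fin (8 * g), Even k.val → Even k'.val →
      k.val < 4 * g → 4 * g ≤ k'.val → ¬ φ.SameCycle k k')) ∧
  (∀ k : Fin (8 * g), ¬ Even k.val → φ.SameCycle k (((Q g) ^ (4 * g)) k)) ∧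
  (∀ k k' : Fin (8 * g), ¬ Even k.val → ¬ Even k'.val → φ.SameCycle k k' →
      k.val % 4 = k'.val % 4)

/-- A *filling permutation*: a permutation of `S_{8g}` satisfying properties (1)–(6) of
Proposition 5.2.  By Proposition 5.2 and Theorem 5.3, minimally intersecting separating
filling pairs on `S_g` (up to labelling) correspond exactly to filling permutations. -/
def IsFillingPerm (g : ℕ) (φ : Equiv.Perm (Fin (8 * g))) : Prop :=
  IsFillingPermAux g φ ∧ φ * (Q g) ^ (4 * g) * φ = tau g

/-! Identify `Fin (8g)` with `Fin (4g) ⊕ Fin (4g)` (lower and upper half). Then `τ` rotates the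
lower half by `+2` and the upper half by `-2`, while `Q^{4g}` just exchanges the halves. Hence
`Q^{4g} τ` sends `inl k` to `inr (k + 2)` and `inr (k + 2)` back to `inl k`: it is the involution
pairing `k` with `4g + (k + 2 mod 4g)`, whose orbits are exactly the supports of the given
transpositions. -/

namespace Equiv.Perm

variable {α ι : Type*} [DecidableEq α]

theorem pairwise_disjoint_swap {a b : ι → α} (ha : Function.Injective a)
    (hb : Function.Injective b) (hab : ∀ i j, a i ≠ b j) :
    Pairwise fun i j => Disjoint (swap (a i) (b i)) (swap (a j) (b j)) := fun i j hij =>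
  disjoint_swap_swap <| by
    simp [ha.ne hij, hb.ne hij, hab, (hab _ _).symm]

theorem eq_list_prod_of_forall_mem_support [Fintype α] {l : List (Perm α)}
    (hl : l.Pairwise Disjoint) {σ : Perm α} (h : ∀ x, ∃ f ∈ l, x ∈ f.support ∧ σ x = f x) :
    σ = l.prod := by
  ext x
  obtain ⟨f, hf, hx, hσ⟩ := h x
  rw [hσ, eq_on_support_mem_disjoint hf hl x hx]

theorem eq_prod_ofFn_swap [Fintype α] {n : ℕ} {a b : Fin n → α} (ha : Function.Injective a)
    (hb : Function.Injective b) (hab : ∀ i j, a i ≠ b j)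
    (hcover : ∀ x, ∃ k, x = a k ∨ x = b k) {σ : Perm α} (hσa : ∀ k, σ (a k) = b k)
    (hσb : ∀ k, σ (b k) = a k) :
    σ = (List.ofFn fun k => swap (a k) (b k)).prod := by
  refine eq_list_prod_of_forall_mem_support
    (List.pairwise_ofFn.2 fun i j hij => pairwise_disjoint_swap ha hb hab hij.ne) fun x => ?_
  obtain ⟨k, rfl | rfl⟩ := hcover x
  · exact ⟨swap (a k) (b k), List.mem_ofFn.2 ⟨k, rfl⟩, by simp [hab],
      by rw [hσa, swap_apply_left]⟩
  · exact ⟨swap (a k) (b k), List.mem_ofFn.2 ⟨k, rfl⟩, by simp [hab],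
      by rw [hσb, swap_apply_right]⟩

end Equiv.Perm

theorem finRotate_pow_apply_val {n : ℕ} (m : ℕ) (i : Fin n) :
    ((finRotate n ^ m) i).val = (i.val + m) % n := by
  have := i.neZero
  induction m with
  | zero => simp [Nat.mod_eq_of_lt i.isLt]
  | succ m ih =>
    rw [pow_succ', Perm.mul_apply, finRotate_apply, Fin.val_add, ih, Fin.val_one', Nat.add_mod_mod,
      Nat.mod_add_mod, add_assoc]

theorem finRotate_pow_finSumFinEquiv {m N : ℕ} (h : m + m = N) (x : Fin m ⊕ Fin m) :
    (finRotate N ^ m) ((finSumFinEquiv.trans (finCongr h)) x) =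
      (finSumFinEquiv.trans (finCongr h)) x.swap := by
  subst h
  ext
  rw [finRotate_pow_apply_val]
  rcases x with k | k
  · simp [Nat.mod_eq_of_lt, add_comm]
  · simp [add_assoc, Nat.mod_eq_of_lt (by omega : k.val < m + m)]

abbrev halvesEquiv (g : ℕ) : Fin (4 * g) ⊕ Fin (4 * g) ≃ Fin (8 * g) :=
  (finSumFinEquiv (m := 4 * g) (n := 4 * g)).trans (finCongr (show 4 * g + 4 * g = 8 * g by ring))

section

variable (g : ℕ) (k : Fin (4 * g))

theorem Q_pow_mul_tau_halvesEquiv_inl :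
    (Q g ^ (4 * g) * tau g) (halvesEquiv g (.inl k)) =
      halvesEquiv g (.inr ((finRotate (4 * g) ^ 2) k)) := by
  rw [Perm.mul_apply, tau, permCongr_apply, symm_apply_apply, sumCongr_apply, Sum.map_inl, Q,
    finRotate_pow_finSumFinEquiv, Sum.swap_inl]

theorem Q_pow_mul_tau_halvesEquiv_inr :
    (Q g ^ (4 * g) * tau g) (halvesEquiv g (.inr ((finRotate (4 * g) ^ 2) k))) =
      halvesEquiv g (.inl k) := by
  rw [Perm.mul_apply, tau, permCongr_apply, symm_apply_apply, sumCongr_apply, Sum.map_inr,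
    inv_pow, ← Perm.mul_apply, inv_mul_cancel, Perm.one_apply, Q, finRotate_pow_finSumFinEquiv,
    Sum.swap_inr]

end

/-- **`Q^{4g} τ` is a product of `4g` disjoint transpositions**, namely
`(1,4g+3)(3,4g+5)⋯(4g−1,4g+1)(2,4g+4)(4,4g+6)⋯(4g−2,8g)`.
In the 0-indexed convention, the transposition through label `ℓ = k+1` (with
`0 ≤ k < 4g`) is `(k, 4g + (k+2) mod 4g)`; the family `F` of these `4g`
transpositions is specified pointwise by the hypothesis `hF`. -/
theorem Q_pow_mul_tau_eq_prod_transpositions (g : ℕ)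
    (F : Fin (4 * g) → Equiv.Perm (Fin (8 * g)))
    (hF : ∀ k : Fin (4 * g), F k =
      Equiv.swap (⟨k.val, by have := k.isLt; omega⟩ : Fin (8 * g))
        ⟨4 * g + (k.val + 2) % (4 * g), by
          have := k.isLt
          have h2 : (k.val + 2) % (4 * g) < 4 * g := Nat.mod_lt _ (by omega)
          omega⟩) :
    (List.ofFn F).Pairwise Equiv.Perm.Disjoint ∧
    (∀ k, (F k).IsSwap) ∧
    (Q g) ^ (4 * g) * tau g = (List.ofFn F).prod := by
  set e := halvesEquiv g
  set ρ := finRotate (4 * g) ^ 2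
  have hab (i j : Fin (4 * g)) : e (.inl i) ≠ e (.inr (ρ j)) :=
    e.injective.ne Sum.inl_ne_inr
  obtain rfl : F = fun k => swap (e (.inl k)) (e (.inr (ρ k))) := by
    funext k
    rw [hF k]
    congr 1
    ext
    simp [e, ρ, finRotate_pow_apply_val, add_comm]
  have ha : Function.Injective fun k => e (.inl k) := e.injective.comp Sum.inl_injective
  have hb : Function.Injective fun k => e (.inr (ρ k)) :=
    e.injective.comp (Sum.inr_injective.comp ρ.injective)
  refine ⟨List.pairwise_ofFn.2 fun i j hij => Perm.pairwise_disjoint_swap ha hb hab hij.ne,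
    fun k => ⟨_, _, hab k k, rfl⟩, Perm.eq_prod_ofFn_swap ha hb hab ?_
    (Q_pow_mul_tau_halvesEquiv_inl g) (Q_pow_mul_tau_halvesEquiv_inr g)⟩
  intro x
  obtain ⟨k | k, rfl⟩ := e.surjective x
  · exact ⟨k, .inl rfl⟩
  · exact ⟨ρ⁻¹ k, .inr (by simp)⟩
end

section
/- Let Γ be a decorated fat graph that is the edge-disjoint union of two standard cycles α = (x₁,...,xₙ) and β = (y₁,...,yₙ), each vertex having degree 4. The curve α is separating on the closed surface obtained from Γ if and only if, for every i, the directed edges yᵢ and yᵢ⁻¹ appear in the same column of the normal matrix M(α,β). -/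
/-- Directed edges of a decorated fat graph which is the edge-disjoint union of two
standard cycles `α = (x₁,…,xₙ)` and `β = (y₁,…,yₙ)`:
`(false, i, true) = xᵢ`, `(false, i, false) = xᵢ⁻¹`,
`(true, i, true) = yᵢ`, `(true, i, false) = yᵢ⁻¹` (indices in `Fin n`). -/
abbrev DirEdge (n : ℕ) := Bool × Fin n × Bool

/-- The fixed-point-free involution `σ₁`, reversing each directed edge. -/
def rev {n : ℕ} : Equiv.Perm (DirEdge n) :=
  Function.Involutive.toPerm (fun e => (e.1, e.2.1, !e.2.2)) (fun e => by simp)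

/-!
The face permutation `σ₀⁻¹σ₁` sends `xᵢ` to the column-2 entry of row `i + 1` and the reverse
of that entry to `xᵢ₊₁`; it sends `xᵢ⁻¹` to the column-4 entry of row `i` and the reverse of
that entry to `xᵢ₋₁⁻¹`. Hence, once the polygons are glued along `β`, all `xᵢ` and column-2
entries lie in one component and all `xᵢ⁻¹` and column-4 entries in one component, so there are
at most two. If some `yⱼ` and `yⱼ⁻¹` lie in different columns, their gluing merges the two.
Otherwise the side of an edge (`xᵢ` or column 2, versus `xᵢ⁻¹` or column 4) is preserved by the
face permutation and by the gluing, so `xᵢ` and `xᵢ⁻¹` stay apart.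
-/
open Equiv Relation

theorem Relation.EqvGen.apply_eq_apply {α β : Type*} {r : α → α → Prop} {f : α → β}
    (hf : ∀ a b, r a b → f a = f b) {a b : α} (h : EqvGen r a b) : f a = f b :=
  congrArg (Quot.lift f hf) (Quot.eqvGen_sound h)

theorem Equiv.Perm.SameCycle.apply_eq_apply {α β : Type*} {σ : Perm α} {f : α → β}
    (hf : ∀ a, f (σ a) = f a) {a b : α} (h : σ.SameCycle a b) : f a = f b := by
  obtain ⟨k, rfl⟩ := h
  induction k using Int.induction_on with
  | zero => rfl
  | succ k ih => rw [ih, add_comm, zpow_add, zpow_one, Perm.mul_apply, hf]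
  | pred k ih =>
    rw [ih, sub_eq_neg_add, zpow_add, zpow_neg_one, Perm.mul_apply, ← hf (σ⁻¹ _),
      Perm.coe_inv, apply_symm_apply]

open Fin.NatCast in
theorem Fin.induction_add_one {n : ℕ} [NeZero n] {p : Fin n → Prop} (zero : p 0)
    (succ : ∀ i, p i → p (i + 1)) (i : Fin n) : p i := by
  suffices h : ∀ m : ℕ, p (m : Fin n) from Fin.cast_val_eq_self i ▸ h i
  intro m
  induction m with
  | zero => exact zero
  | succ m ih => exact (Nat.cast_succ (R := Fin n) m) ▸ succ _ ih

section

variable {n : ℕ}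

theorem rev_rev (e : DirEdge n) : rev (rev e) = e := by
  show (e.1, e.2.1, !!e.2.2) = e
  rw [Bool.not_not]

def faceMap (σ₀ : Perm (DirEdge n)) : Perm (DirEdge n) := σ₀⁻¹ * rev

/-- `e` and `f` lie in the same component of the surface cut along `α`: the polygons
(cycles of `faceMap σ₀`) glued back along the `y`-edges only. -/
def SameComponent (σ₀ : Perm (DirEdge n)) : DirEdge n → DirEdge n → Prop :=
  EqvGen fun a b => (faceMap σ₀).SameCycle a b ∨ (a.1 = true ∧ b = rev a)

/-- The local side of `α` an edge lies on: `xᵢ` and the entries of column 2 on one side,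
`xᵢ⁻¹` and the entries of column 4 on the other. -/
def side (c₂ : Fin n → Fin n × Bool) : DirEdge n → Bool
  | (false, _, b) => b
  | (true, p) => decide (∃ r, c₂ r = p)

def columnEntry (c₂ c₄ : Fin n → Fin n × Bool) (s : Fin n × Bool) : Fin n × Bool :=
  if s.2 then c₂ s.1 else c₄ s.1

/-- Row `i` of `M(α,β)` is `(xᵢ, c₂ i, xᵢ₋₁⁻¹, c₄ i)`, read in the cyclic order `σ₀`. -/
def RealizesNormalMatrix [NeZero n] (c₂ c₄ : Fin n → Fin n × Bool) (σ₀ : Perm (DirEdge n)) :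
    Prop :=
  ∀ i : Fin n,
    σ₀ (false, i, true) = (true, c₂ i) ∧ σ₀ (true, c₂ i) = (false, i - 1, false) ∧
    σ₀ (false, i - 1, false) = (true, c₄ i) ∧ σ₀ (true, c₄ i) = (false, i, true)

variable {c₂ c₄ : Fin n → Fin n × Bool} {σ₀ : Perm (DirEdge n)}

theorem exists_columnEntry (hcover : Function.Bijective (columnEntry c₂ c₄))
    (p : Fin n × Bool) : (∃ r, c₂ r = p) ∨ ∃ r, c₄ r = p := by
  obtain ⟨⟨r, _ | _⟩, rfl⟩ := hcover.2 p
  exacts [.inr ⟨r, rfl⟩, .inl ⟨r, rfl⟩]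

theorem column₂_ne_column₄ (hcover : Function.Bijective (columnEntry c₂ c₄)) (r i : Fin n) :
    c₂ r ≠ c₄ i := fun h => by
  simpa using @hcover.1 (r, true) (i, false) h

theorem side_column₂ (r : Fin n) : side c₂ (true, c₂ r) = true :=
  decide_eq_true ⟨r, rfl⟩

theorem side_column₄ (hcover : Function.Bijective (columnEntry c₂ c₄)) (i : Fin n) :
    side c₂ (true, c₄ i) = false :=
  decide_eq_false fun ⟨r, hr⟩ => column₂_ne_column₄ hcover r i hr

theorem faceMap_apply (e : DirEdge n) : faceMap σ₀ e = σ₀.symm (rev e) := rfl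

theorem faceMap_rev (e : DirEdge n) : faceMap σ₀ (rev e) = σ₀.symm e := by
  rw [faceMap_apply, rev_rev]

theorem sameComponent_equivalence : Equivalence (SameComponent σ₀) :=
  EqvGen.is_equivalence _

theorem sameComponent_faceMap (e : DirEdge n) : SameComponent σ₀ e (faceMap σ₀ e) :=
  .rel _ _ (.inl ⟨1, rfl⟩)

theorem sameComponent_rev (p : Fin n × Bool) : SameComponent σ₀ (true, p) (rev (true, p)) :=
  .rel _ _ (.inr ⟨rfl, rfl⟩)

theorem side_rev (hcol : ∀ j, side c₂ (true, j, true) = side c₂ (true, j, false))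
    (p : Fin n × Bool) : side c₂ (rev (true, p)) = side c₂ (true, p) := by
  obtain ⟨j, _ | _⟩ := p
  exacts [hcol j, (hcol j).symm]

variable [NeZero n]

theorem faceMap_xEdge (hσ₀ : RealizesNormalMatrix c₂ c₄ σ₀) (i : Fin n) :
    faceMap σ₀ (false, i, true) = (true, c₂ (i + 1)) := by
  rw [faceMap_apply, symm_apply_eq, (hσ₀ (i + 1)).2.1, add_sub_cancel_right]
  rfl

theorem faceMap_xEdge_inv (hσ₀ : RealizesNormalMatrix c₂ c₄ σ₀) (i : Fin n) :
    faceMap σ₀ (false, i, false) = (true, c₄ i) := by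
  rw [faceMap_apply, symm_apply_eq, (hσ₀ i).2.2.2]
  rfl

theorem faceMap_rev_column₂ (hσ₀ : RealizesNormalMatrix c₂ c₄ σ₀) (i : Fin n) :
    faceMap σ₀ (rev (true, c₂ i)) = (false, i, true) := by
  rw [faceMap_rev, symm_apply_eq, (hσ₀ i).1]

theorem faceMap_rev_column₄ (hσ₀ : RealizesNormalMatrix c₂ c₄ σ₀) (i : Fin n) :
    faceMap σ₀ (rev (true, c₄ i)) = (false, i - 1, false) := by
  rw [faceMap_rev, symm_apply_eq, (hσ₀ i).2.2.1]

theorem sameComponent_column₂ (hσ₀ : RealizesNormalMatrix c₂ c₄ σ₀) (i : Fin n) :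
    SameComponent σ₀ (true, c₂ i) (false, i, true) :=
  faceMap_rev_column₂ hσ₀ i ▸ sameComponent_equivalence.trans (sameComponent_rev _)
    (sameComponent_faceMap _)

theorem sameComponent_column₄ (hσ₀ : RealizesNormalMatrix c₂ c₄ σ₀) (i : Fin n) :
    SameComponent σ₀ (true, c₄ i) (false, i - 1, false) :=
  faceMap_rev_column₄ hσ₀ i ▸ sameComponent_equivalence.trans (sameComponent_rev _)
    (sameComponent_faceMap _)

theorem sameComponent_xEdge_zero (hσ₀ : RealizesNormalMatrix c₂ c₄ σ₀) (i : Fin n) (b : Bool) :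
    SameComponent σ₀ (false, i, b) (false, 0, b) := by
  have hc := @sameComponent_equivalence _ σ₀
  induction i using Fin.induction_add_one with
  | zero => exact hc.refl _
  | succ i ih =>
    cases b
    · have h := sameComponent_column₄ hσ₀ (i + 1)
      rw [add_sub_cancel_right] at h
      exact hc.trans (faceMap_xEdge_inv hσ₀ (i + 1) ▸ sameComponent_faceMap _) (hc.trans h ih)
    · have h := faceMap_xEdge hσ₀ i ▸ sameComponent_faceMap (σ₀ := σ₀) (false, i, true)
      exact hc.trans (hc.symm (hc.trans h (sameComponent_column₂ hσ₀ (i + 1)))) ih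

theorem sameComponent_side (hcover : Function.Bijective (columnEntry c₂ c₄))
    (hσ₀ : RealizesNormalMatrix c₂ c₄ σ₀) (e : DirEdge n) :
    SameComponent σ₀ e (false, 0, side c₂ e) := by
  have hc := @sameComponent_equivalence _ σ₀
  obtain ⟨_ | _, i, b⟩ := e
  · exact sameComponent_xEdge_zero hσ₀ i b
  · obtain ⟨r, hr₂⟩ | ⟨r, hr₄⟩ := exists_columnEntry hcover (i, b)
    · rw [← hr₂, side_column₂]
      exact hc.trans (sameComponent_column₂ hσ₀ r) (sameComponent_xEdge_zero hσ₀ r true)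
    · rw [← hr₄, side_column₄ hcover]
      exact hc.trans (sameComponent_column₄ hσ₀ r) (sameComponent_xEdge_zero hσ₀ _ false)

theorem side_faceMap_rev (hcover : Function.Bijective (columnEntry c₂ c₄))
    (hσ₀ : RealizesNormalMatrix c₂ c₄ σ₀)
    (hcol : ∀ j, side c₂ (true, j, true) = side c₂ (true, j, false)) (q : Fin n × Bool) :
    side c₂ (faceMap σ₀ (rev (true, q))) = side c₂ (rev (true, q)) := by
  rw [side_rev hcol]
  obtain ⟨r, rfl⟩ | ⟨r, rfl⟩ := exists_columnEntry hcover q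
  · rw [faceMap_rev_column₂ hσ₀, side_column₂]; rfl
  · rw [faceMap_rev_column₄ hσ₀, side_column₄ hcover]; rfl

theorem side_faceMap (hcover : Function.Bijective (columnEntry c₂ c₄))
    (hσ₀ : RealizesNormalMatrix c₂ c₄ σ₀)
    (hcol : ∀ j, side c₂ (true, j, true) = side c₂ (true, j, false)) (e : DirEdge n) :
    side c₂ (faceMap σ₀ e) = side c₂ e := by
  obtain ⟨_ | _, i, _ | _⟩ := e
  · rw [faceMap_xEdge_inv hσ₀, side_column₄ hcover]; rfl
  · rw [faceMap_xEdge hσ₀, side_column₂]; rfl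
  · exact side_faceMap_rev hcover hσ₀ hcol (i, true)
  · exact side_faceMap_rev hcover hσ₀ hcol (i, false)

theorem side_eq_of_sameComponent (hcover : Function.Bijective (columnEntry c₂ c₄))
    (hσ₀ : RealizesNormalMatrix c₂ c₄ σ₀)
    (hcol : ∀ j, side c₂ (true, j, true) = side c₂ (true, j, false)) {e f : DirEdge n}
    (h : SameComponent σ₀ e f) : side c₂ e = side c₂ f := by
  refine h.apply_eq_apply ?_
  rintro a b (hab | ⟨ha, rfl⟩)
  · exact hab.apply_eq_apply (side_faceMap hcover hσ₀ hcol)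
  · obtain ⟨_, p⟩ := a
    cases ha
    exact (side_rev hcol p).symm

theorem sameComponent_of_side_ne (hcover : Function.Bijective (columnEntry c₂ c₄))
    (hσ₀ : RealizesNormalMatrix c₂ c₄ σ₀) {j : Fin n}
    (hj : side c₂ (true, j, true) ≠ side c₂ (true, j, false)) (e f : DirEdge n) :
    SameComponent σ₀ e f := by
  have hc := @sameComponent_equivalence _ σ₀
  have hsides : SameComponent σ₀ (false, 0, side c₂ (true, j, true))
      (false, 0, side c₂ (true, j, false)) :=
    hc.trans (hc.symm (sameComponent_side hcover hσ₀ _))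
      (hc.trans (sameComponent_rev _) (sameComponent_side hcover hσ₀ _))
  have hx : SameComponent σ₀ (false, 0, true) (false, 0, false) := by
    revert hsides hj
    cases side c₂ (true, j, true) <;> cases side c₂ (true, j, false) <;> simp
    exact hc.symm
  have hbase : ∀ e, SameComponent σ₀ e (false, 0, true) := fun e => by
    have he := sameComponent_side hcover hσ₀ e
    generalize side c₂ e = s at he
    cases s
    exacts [hc.trans he (hc.symm hx), he]
  exact hc.trans (hbase e) (hc.symm (hbase f))

end

theorem separating_iff_same_column_general (n : ℕ) (hn : 1 < n)
    (c₂ c₄ : Fin n → Fin n × Bool)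
    -- the entries of columns 2 and 4 exhaust all 2n directed y-edges
    (hcover : Function.Bijective fun s : Fin n × Bool =>
      if s.2 then c₂ s.1 else c₄ s.1)
    (σ₀ : Equiv.Perm (DirEdge n))
    -- σ₀ realizes the rows (xᵢ, c₂ i, xᵢ₋₁⁻¹, c₄ i) of the normal matrix
    (hσ₀ : ∀ i : Fin n,
      σ₀ (false, i, true) = (true, (c₂ i).1, (c₂ i).2) ∧
      σ₀ (true, (c₂ i).1, (c₂ i).2) = (false, i - ⟨1, hn⟩, false) ∧
      σ₀ (false, i - ⟨1, hn⟩, false) = (true, (c₄ i).1, (c₄ i).2) ∧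
      σ₀ (true, (c₄ i).1, (c₄ i).2) = (false, i, true)) :
    (¬ ∀ e f : DirEdge n,
        Relation.EqvGen
          (fun a b => (σ₀⁻¹ * rev).SameCycle a b ∨ (a.1 = true ∧ b = rev a)) e f) ↔
      (∀ i : Fin n, (∃ r, c₂ r = (i, true)) ↔ (∃ r, c₂ r = (i, false))) := by
  have : NeZero n := ⟨by omega⟩
  rw [← Fin.one_eq_mk_of_lt hn] at hσ₀
  change (¬ ∀ e f, SameComponent σ₀ e f) ↔ _
  have hside (i : Fin n) : side c₂ (true, i, true) = side c₂ (true, i, false) ↔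
      ((∃ r, c₂ r = (i, true)) ↔ ∃ r, c₂ r = (i, false)) :=
    decide_eq_decide
  constructor
  · intro hsep i
    rw [← hside]
    by_contra hi
    exact hsep (sameComponent_of_side_ne hcover hσ₀ hi)
  · intro hcol hall
    have := side_eq_of_sameComponent hcover hσ₀ (fun i => (hside i).2 (hcol i))
      (hall (false, 0, true) (false, 0, false))
    exact Bool.noConfusion this

/-- **Theorem 3.2 (classification of standard cycles).**
Let `Γ` be a decorated fat graph which is the edge-disjoint union of two standard
cycles `α = (x₁,…,xₙ)` and `β = (y₁,…,yₙ)`, every vertex having degree 4.  The vertex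
`vᵢ` (initial vertex of `xᵢ`) carries the cyclic order `(xᵢ, c₂ i, xᵢ₋₁⁻¹, c₄ i)`,
which is the `i`-th row of the normal matrix `M(α,β)`; the functions
`c₂, c₄ : Fin n → Fin n × Bool` record the directed `y`-edges occupying columns 2
and 4.  Cutting the resulting closed surface along `α ∪ β` yields polygons
corresponding to the cycles of `σ₀⁻¹σ₁`; the curve `α` is *separating* iff when the
polygons are glued back along the `y`-edges only (each `yᵢ` to `yᵢ⁻¹`), the result
stays disconnected, i.e. the equivalence generated by "same cycle of `σ₀⁻¹σ₁`" and
"`y`-edge glued to its reverse" has more than one class.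

The theorem: `α` is separating iff for every `i`, the edges `yᵢ` and `yᵢ⁻¹` lie in the
same column of `M(α,β)`. -/
theorem separating_iff_same_column (n : ℕ) (hn : 1 < n)
    (c₂ c₄ : Fin n → Fin n × Bool)
    -- the entries of columns 2 and 4 exhaust all 2n directed y-edges
    (hcover : Function.Bijective fun s : Fin n × Bool =>
      if s.2 then c₂ s.1 else c₄ s.1)
    -- β = (y₁,…,yₙ) is a standard cycle: at each vertex the two opposite y-entries
    -- are consecutive edges of β, oppositely directed
    (hstd : ∀ i : Fin n, ∃ j : Fin n,
      (c₂ i = (j + ⟨1, hn⟩, true) ∧ c₄ i = (j, false)) ∨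
      (c₂ i = (j, false) ∧ c₄ i = (j + ⟨1, hn⟩, true)))
    (σ₀ : Equiv.Perm (DirEdge n))
    -- σ₀ realizes the rows (xᵢ, c₂ i, xᵢ₋₁⁻¹, c₄ i) of the normal matrix
    (hσ₀ : ∀ i : Fin n,
      σ₀ (false, i, true) = (true, (c₂ i).1, (c₂ i).2) ∧
      σ₀ (true, (c₂ i).1, (c₂ i).2) = (false, i - ⟨1, hn⟩, false) ∧
      σ₀ (false, i - ⟨1, hn⟩, false) = (true, (c₄ i).1, (c₄ i).2) ∧
      σ₀ (true, (c₄ i).1, (c₄ i).2) = (false, i, true)) :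
    (¬ ∀ e f : DirEdge n,
        Relation.EqvGen
          (fun a b => (σ₀⁻¹ * rev).SameCycle a b ∨ (a.1 = true ∧ b = rev a)) e f) ↔
      (∀ i : Fin n, (∃ r, c₂ r = (i, true)) ↔ (∃ r, c₂ r = (i, false))) :=
  separating_iff_same_column_general n hn c₂ c₄ hcover σ₀ hσ₀
end

section
/- Given a filling permutation φ ∈ S_{8g} (a permutation satisfying the six defining properties, including φ Q^{4g} φ = τ and being a product of two disjoint 4g-cycles, one containing all of {1,3,...,4g-1} and the other all of {4g+1,...,8g-1}), the closed orientable surface obtained by gluing two 4g-gons according to φ has Euler characteristic 2 - 2g, hence genus g. -/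
open Equiv

/-- The setoid on `α` whose classes are the cycles (orbits) of a permutation. -/
def sameCycleSetoid {α : Type*} (σ : Equiv.Perm α) : Setoid α :=
  ⟨σ.SameCycle, ⟨fun _ => Equiv.Perm.SameCycle.refl σ _,
    fun h => h.symm, fun h h' => h.trans h'⟩⟩

lemma finRotate_pow_val {N : ℕ} (m : ℕ) (x : Fin N) :
    (((finRotate N) ^ m) x).val = (x.val + m) % N := by
  induction m with
  | zero => simp [Nat.mod_eq_of_lt x.isLt]
  | succ m ih =>
    obtain ⟨n, rfl⟩ : ∃ n, N = n + 1 := ⟨N - 1, by omega⟩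
    rw [pow_succ', Equiv.Perm.mul_apply, finRotate_succ_apply, Fin.val_add, ih, Fin.val_one']
    conv_rhs => rw [← Nat.add_assoc, Nat.add_mod]

lemma finRotate_pow_N {N : ℕ} : (finRotate N) ^ N = 1 := by
  ext x
  simp [finRotate_pow_val, Nat.add_mod, Nat.mod_eq_of_lt x.isLt]

lemma finRotate_inv_sq {N : ℕ} : ((finRotate N)⁻¹) ^ 2 = (finRotate N) ^ (2 * (N - 1)) := by
  rcases Nat.eq_zero_or_pos N with h | h
  · subst h; ext x; exact absurd x.isLt (by simp)
  · have h1 : (finRotate N)⁻¹ = (finRotate N) ^ (N - 1) := by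
      rw [inv_eq_iff_mul_eq_one, ← pow_succ', Nat.sub_add_cancel h, finRotate_pow_N]
    rw [h1, ← pow_mul, Nat.mul_comm]

lemma tau_val (g : ℕ) (x : Fin (8 * g)) :
    (tau g x).val = if x.val < 4 * g then (x.val + 2) % (4 * g)
      else 4 * g + ((x.val - 4 * g + 2 * (4 * g - 1)) % (4 * g)) := by
  set e := ((finSumFinEquiv (m := 4 * g) (n := 4 * g)).trans
      (finCongr (show 4 * g + 4 * g = 8 * g by ring))) with he
  have key : ∀ y : Sum (Fin (4*g)) (Fin (4*g)), (tau g) (e y) =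
      e ((Equiv.sumCongr ((finRotate (4 * g)) ^ 2) (((finRotate (4 * g))⁻¹) ^ 2)) y) := by
    intro y
    rw [tau, Equiv.permCongr_apply, Equiv.symm_apply_apply]
  have hval : ∀ a : Fin (4*g), (e (Sum.inl a)).val = a.val ∧ (e (Sum.inr a)).val = 4*g + a.val := by
    intro a
    constructor <;>
      simp [he, finSumFinEquiv_apply_left, finSumFinEquiv_apply_right, Nat.add_comm]
  obtain ⟨y, rfl⟩ : ∃ y, e y = x := ⟨e.symm x, e.apply_symm_apply x⟩
  rcases y with a | a
  · rw [key]
    have h1 := (hval a).1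
    have h2 := (hval ((finRotate (4*g) ^ 2) a)).1
    simp only [Equiv.sumCongr_apply, Sum.map_inl, h1, h2, finRotate_pow_val]
    rw [if_pos a.isLt]
  · rw [key]
    have h1 := (hval a).2
    have h2 := (hval ((((finRotate (4*g))⁻¹) ^ 2) a)).2
    have h3 : ((((finRotate (4*g))⁻¹) ^ 2) a).val = (a.val + 2*(4*g-1)) % (4*g) := by
      rw [finRotate_inv_sq, finRotate_pow_val]
    simp only [Equiv.sumCongr_apply, Sum.map_inr, h1, h2, h3]
    have := a.isLt
    rw [if_neg (by omega)]
    congr 2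
    omega

lemma rho_val (g : ℕ) (hg : 1 ≤ g) (x : Fin (8 * g)) :
    (((Q g) ^ (4 * g) * tau g) x).val =
      if x.val < 4 * g then 4 * g + ((x.val + 2) % (4 * g))
      else (x.val - 4 * g + 2 * (4 * g - 1)) % (4 * g) := by
  have hx := x.isLt
  rw [Equiv.Perm.mul_apply, Q, finRotate_pow_val, tau_val]
  split_ifs with h
  · have ha : (x.val + 2) % (4 * g) < 4 * g := Nat.mod_lt _ (by omega)
    rw [Nat.mod_eq_of_lt (by omega)]
    omega
  · have hb : (x.val - 4 * g + 2 * (4 * g - 1)) % (4 * g) < 4 * g := Nat.mod_lt _ (by omega)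
    have : 4 * g + (x.val - 4 * g + 2 * (4 * g - 1)) % (4 * g) + 4 * g
        = (x.val - 4 * g + 2 * (4 * g - 1)) % (4 * g) + 1 * (8 * g) := by ring
    rw [this, Nat.add_mul_mod_self_right, Nat.mod_eq_of_lt (by omega)]

lemma rho_invol (g : ℕ) (hg : 1 ≤ g) (x : Fin (8 * g)) :
    ((Q g) ^ (4 * g) * tau g) (((Q g) ^ (4 * g) * tau g) x) = x := by
  have hx := x.isLt
  set ρ := (Q g) ^ (4 * g) * tau g with hρ
  apply Fin.ext
  have h1 := rho_val g hg x
  have h2 := rho_val g hg (ρ x)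
  rw [h2, h1]
  split_ifs with h h' h'
  · have := Nat.mod_lt (x.val + 2) (show 0 < 4*g by omega); omega
  · have ha : (x.val + 2) % (4 * g) < 4 * g := Nat.mod_lt _ (by omega)
    have : 4 * g + (x.val + 2) % (4 * g) - 4 * g = (x.val + 2) % (4 * g) := by omega
    rw [this, Nat.mod_add_mod]
    have : x.val + 2 + 2 * (4 * g - 1) = x.val + 2 * (4 * g) := by omega
    rw [this, Nat.add_mul_mod_self_right, Nat.mod_eq_of_lt h]
  · rw [Nat.mod_add_mod]
    have : x.val - 4 * g + 2 * (4 * g - 1) + 2 = (x.val - 4 * g) + 2 * (4 * g) := by omega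
    rw [this, Nat.add_mul_mod_self_right, Nat.mod_eq_of_lt (by omega)]
    omega
  · have := Nat.mod_lt (x.val - 4 * g + 2 * (4 * g - 1)) (show 0 < 4*g by omega); omega

lemma rho_ne (g : ℕ) (hg : 1 ≤ g) (x : Fin (8 * g)) :
    ((Q g) ^ (4 * g) * tau g) x ≠ x := by
  have hx := x.isLt
  have h1 := rho_val g hg x
  intro hE
  rw [hE] at h1
  split_ifs at h1 with h
  · omega
  · have := Nat.mod_lt (x.val - 4 * g + 2 * (4 * g - 1)) (show 0 < 4*g by omega); omega


/-- **Theorem 5.3 (Euler characteristic of the glued surface).**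
Given a filling permutation `φ ∈ S_{8g}`, glue two `4g`-gons whose `8g` sides are
labelled by the arcs `A_g`, identifying each side with its inverse (label shift by
`4g`, i.e. `Q^{4g}`), the clockwise successor of side `s` being `φ s`.  The polygon
vertices are identified along the orbits of the permutation `Q^{4g} ∘ φ` (the vertex
following side `s` is glued to the vertex following side `Q^{4g}(φ s)`), in groups of
four, so the glued CW-complex has `2g` zero-cells, `4g` one-cells and `2` two-cells:
its Euler characteristic is `2g − 4g + 2 = 2 − 2g`, hence the closed orientable
surface obtained has genus `g`. -/
theorem glued_surface_euler_char (g : ℕ) (hg : 1 ≤ g)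
    (φ : Equiv.Perm (Fin (8 * g))) (h : IsFillingPerm g φ) :
    Nat.card (Quotient (sameCycleSetoid ((Q g) ^ (4 * g) * φ))) = 2 * g ∧
    (Nat.card (Quotient (sameCycleSetoid ((Q g) ^ (4 * g) * φ))) : ℤ) -
        (4 * g : ℤ) + 2 = 2 - 2 * g := by

  set σ := (Q g) ^ (4 * g) * φ with hσ
  -- σ² = Q^{4g} τ
  have hs2 : σ * σ = (Q g) ^ (4 * g) * tau g := by
    rw [← h.2, hσ]; group
  have hfix2 : ∀ x, σ (σ x) ≠ x := by
    intro x hE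
    have h' : (σ * σ) x = x := by rw [Equiv.Perm.mul_apply]; exact hE
    rw [hs2] at h'
    exact rho_ne g hg x h'
  have hfix1 : ∀ x, σ x ≠ x := fun x hE => hfix2 x (by rw [hE, hE])
  have h4 : ∀ x, σ (σ (σ (σ x))) = x := by
    intro x
    have := rho_invol g hg x
    rw [← hs2] at this
    simpa [Equiv.Perm.mul_apply] using this
  have hfix3 : ∀ x, σ (σ (σ x)) ≠ x := by
    intro x hE
    have := h4 x
    rw [hE] at this
    exact hfix1 x this
  -- decidability / fintype setup
  letI : DecidableRel (sameCycleSetoid σ).r :=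
    fun a b => (inferInstance : Decidable (σ.SameCycle a b))
  letI : Fintype (Quotient (sameCycleSetoid σ)) := Quotient.fintype _
  have hN : Nat.card (Quotient (sameCycleSetoid σ)) = Fintype.card (Quotient (sameCycleSetoid σ)) :=
    Nat.card_eq_fintype_card
  -- fibers
  have hfiber : ∀ q : Quotient (sameCycleSetoid σ),
      (Finset.univ.filter (fun x => Quotient.mk (sameCycleSetoid σ) x = q)).card = 4 := by
    intro q
    obtain ⟨x, rfl⟩ := q.exists_rep
    have hset : (Finset.univ.filter (fun y => Quotient.mk (sameCycleSetoid σ) y = ⟦x⟧))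
        = {x, σ x, σ (σ x), σ (σ (σ x))} := by
      ext y
      simp only [Finset.mem_filter, Finset.mem_univ, true_and, Finset.mem_insert,
        Finset.mem_singleton]
      constructor
      · intro hy
        have hy' : σ.SameCycle x y :=
          Equiv.Perm.SameCycle.symm (Quotient.exact hy)
        obtain ⟨i, _, _, hi⟩ := hy'.exists_pow_eq σ
        have hr : σ ^ i = σ ^ (i % 4) := by
          conv_lhs => rw [← Nat.div_add_mod i 4]
          rw [pow_add, pow_mul]
          have : σ ^ 4 = 1 := Equiv.Perm.ext fun z => by
            simpa [pow_succ, Equiv.Perm.mul_apply] using h4 z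
          rw [this, one_pow, one_mul]
        rw [hr] at hi
        have hlt : i % 4 < 4 := Nat.mod_lt _ (by norm_num)
        interval_cases hh : (i % 4) <;>
          simp only [pow_zero, pow_one, pow_succ, Equiv.Perm.mul_apply, Equiv.Perm.one_apply] at hi <;>
          simp [← hi]
      · intro hy
        have key : ∀ k : ℕ, Quotient.mk (sameCycleSetoid σ) ((σ ^ k) x)
            = Quotient.mk (sameCycleSetoid σ) x :=
          fun k => Quotient.sound (Equiv.Perm.SameCycle.symm ⟨(k : ℤ), by simp⟩)
        rcases hy with rfl | rfl | rfl | rfl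
        · exact rfl
        · simpa using key 1
        · simpa [pow_succ, Equiv.Perm.mul_apply] using key 2
        · simpa [pow_succ, Equiv.Perm.mul_apply] using key 3
    rw [hset]
    have d1 : x ≠ σ x := fun hE => hfix1 x hE.symm
    have d2 : x ≠ σ (σ x) := fun hE => hfix2 x hE.symm
    have d3 : x ≠ σ (σ (σ x)) := fun hE => hfix3 x hE.symm
    have d4 : σ x ≠ σ (σ x) := fun hE => hfix1 (σ x) hE.symm
    have d5 : σ x ≠ σ (σ (σ x)) := fun hE => hfix2 (σ x) hE.symm
    have d6 : σ (σ x) ≠ σ (σ (σ x)) := fun hE => hfix1 (σ (σ x)) hE.symm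
    rw [Finset.card_insert_of_notMem (by simp [d1, d2, d3]),
      Finset.card_insert_of_notMem (by simp [d4, d5]),
      Finset.card_insert_of_notMem (by simp [d6]), Finset.card_singleton]
  have hcount : 8 * g = 4 * Fintype.card (Quotient (sameCycleSetoid σ)) := by
    have := Finset.card_eq_sum_card_fiberwise
      (f := fun x : Fin (8 * g) => Quotient.mk (sameCycleSetoid σ) x)
      (s := Finset.univ) (t := Finset.univ) (fun x _ => Finset.mem_univ _)
    rw [Finset.card_univ, Fintype.card_fin] at this
    have hsum : (∑ b : Quotient (sameCycleSetoid σ),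
        (Finset.univ.filter (fun x : Fin (8 * g) => Quotient.mk (sameCycleSetoid σ) x = b)).card)
        = 4 * Fintype.card (Quotient (sameCycleSetoid σ)) := by
      rw [Finset.sum_congr rfl (fun q _ => hfiber q), Finset.sum_const, Finset.card_univ,
        smul_eq_mul, Nat.mul_comm]
    exact this.trans hsum
  have hmain : Nat.card (Quotient (sameCycleSetoid σ)) = 2 * g := by
    rw [hN]; omega
  refine ⟨hmain, ?_⟩
  rw [hmain]
  push_cast
  ring
end
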